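/- If two signals s₁, s₂ of the same order agree on [0, l(φ)] (i.e., s₁(t) = s₂(t) for all t ≤ l(φ), both having length at least l(φ)), then s₁ ⊨ φ iff s₂ ⊨ φ. -/

import Mathlib

/-- Syntax of STL* formulae over signals of order `n`.  An atomic predicate is
given by a predicate on the tuple of signal values at the current time and at
the frozen time. -/
inductive STL (n : ℕ) where
  | atom : ((Fin n → ℝ) → (Fin n → ℝ) → Prop) → STL n
  | neg : STL n → STL n
  | disj : STL n → STL n → STL n
  | untl : ℝ → ℝ → STL n → STL n → STL n
  | freeze : STL n → STL n

/-- STL* satisfaction relation `(s, t, t*) ⊨ φ`. -/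
def sat {n : ℕ} (s : ℝ → Fin n → ℝ) : STL n → ℝ → ℝ → Prop
  | .atom μ, t, ts => μ (s t) (s ts)
  | .neg φ, t, ts => ¬ sat s φ t ts
  | .disj φ ψ, t, ts => sat s φ t ts ∨ sat s ψ t ts
  | .untl a b φ ψ, t, ts => ∃ t' ∈ Set.Icc (t + a) (t + b),
      sat s ψ t' ts ∧ ∀ t'' ∈ Set.Icc t t', sat s φ t'' ts
  | .freeze φ, t, ts => sat s φ t t

/-- The formula `true`. -/
def STL.tt {n : ℕ} : STL n := .atom (fun _ _ => True)

/-- Eventually `F[a,b] φ := true U[a,b] φ`. -/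
def STL.ev {n : ℕ} (a b : ℝ) (φ : STL n) : STL n := .untl a b .tt φ

/-- Globally `G[a,b] φ := ¬ F[a,b] ¬ φ`. -/
def STL.glob {n : ℕ} (a b : ℝ) (φ : STL n) : STL n := .neg (.untl a b .tt (.neg φ))

/-- Well-formedness: every until operator has bounds `0 ≤ a ≤ b`. -/
def wf {n : ℕ} : STL n → Prop
  | .atom _ => True
  | .neg φ => wf φ
  | .disj φ ψ => wf φ ∧ wf ψ
  | .untl a b φ ψ => 0 ≤ a ∧ a ≤ b ∧ wf φ ∧ wf ψ
  | .freeze φ => wf φ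

/-- The sufficient signal length `l(φ)`. -/
def len {n : ℕ} : STL n → ℝ
  | .atom _ => 0
  | .neg φ => len φ
  | .disj φ ψ => max (len φ) (len ψ)
  | .untl _ b φ ψ => max (len φ) (len ψ) + b
  | .freeze φ => len φ

/-!
Strengthen the claim to arbitrary evaluation times `0 ≤ t* ≤ t`: the truth of `(s, t, t*) ⊨ φ`
depends only on `s` on `[0, t + l(φ)]`. This invariant is preserved by induction on `φ`: an until
operator with `0 ≤ a` only evaluates its arguments at times in `[t, t + b]`, and a freeze moves
`t*` up to `t`, which stays nonnegative.
-/

lemma sat_iff_of_eqOn {n : ℕ} {s₁ s₂ : ℝ → Fin n → ℝ} {φ : STL n} (hwf : wf φ) {t ts : ℝ}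
    (hts₀ : 0 ≤ ts) (hts : ts ≤ t) (heq : Set.EqOn s₁ s₂ (Set.Icc 0 (t + len φ))) :
    sat s₁ φ t ts ↔ sat s₂ φ t ts := by
  induction φ generalizing t ts with
  | atom μ =>
    have ht : t ∈ Set.Icc 0 (t + len (.atom μ : STL n)) := ⟨hts₀.trans hts, by simp [len]⟩
    have hts' : ts ∈ Set.Icc 0 (t + len (.atom μ : STL n)) := ⟨hts₀, by simpa [len] using hts⟩
    simp only [sat, heq ht, heq hts']
  | neg φ ih => exact not_congr (ih hwf hts₀ hts heq)
  | disj φ ψ ihφ ihψ =>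
    exact or_congr
      (ihφ hwf.1 hts₀ hts (heq.mono (Set.Icc_subset_Icc_right (by simp [len]))))
      (ihψ hwf.2 hts₀ hts (heq.mono (Set.Icc_subset_Icc_right (by simp [len]))))
  | untl a b φ ψ ihφ ihψ =>
    obtain ⟨ha, -, hwφ, hwψ⟩ := hwf
    have hlφ : len φ ≤ max (len φ) (len ψ) := le_max_left _ _
    have hlψ : len ψ ≤ max (len φ) (len ψ) := le_max_right _ _
    refine exists_congr fun t' => and_congr_right fun ⟨ht'a, ht'b⟩ => and_congr ?_ ?_
    · exact ihψ hwψ hts₀ (by linarith)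
        (heq.mono (Set.Icc_subset_Icc_right (by simp only [len]; linarith)))
    · refine forall₂_congr fun t'' ⟨htt'', ht''t'⟩ => ?_
      exact ihφ hwφ hts₀ (hts.trans htt'')
        (heq.mono (Set.Icc_subset_Icc_right (by simp only [len]; linarith)))
  | freeze φ ih => exact ih hwf (hts₀.trans hts) le_rfl heq

/-- if two signals of the same order agree on `[0, l(φ)]`, then
`s₁ ⊨ φ` iff `s₂ ⊨ φ` (where `s ⊨ φ` means `(s,0,0) ⊨ φ`). -/
theorem sat_eq_of_agree {n : ℕ} (s₁ s₂ : ℝ → Fin n → ℝ) (φ : STL n) (hwf : wf φ)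
    (hagree : ∀ t : ℝ, 0 ≤ t → t ≤ len φ → s₁ t = s₂ t) :
    sat s₁ φ 0 0 ↔ sat s₂ φ 0 0 :=
  sat_iff_of_eqOn hwf le_rfl le_rfl fun u hu => hagree u hu.1 (by simpa using hu.2)
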